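/- arXiv:1508.07256 — 2 statements merged into one kernel-verified Lean document; each statement's English description precedes it below -/
import Mathlib

section
/- For every (possibly infinite) graph G and all natural numbers r, s, every graph that is a shallow minor at depth s of some shallow minor of G at depth r is itself a shallow minor of G at depth 2rs + r + s; that is, (G▽r)▽s ⊆ G▽(2rs+r+s). -/
namespace NWD

open SimpleGraph Filter

/-! ### Shallow minors -/

/-- A `d`-shallow minor model of `H` in `G`: a family of pairwise disjoint branch sets,
each connected of radius at most `d` (witnessed by a center joined to every vertex of the
branch set by a walk of length at most `d` inside the branch set), such that every edge of `H`
is realized by an edge of `G` between the corresponding branch sets. -/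
def IsShallowMinorModel {V W : Type} (G : SimpleGraph V) (H : SimpleGraph W) (d : ℕ)
    (α : W → G.Subgraph) : Prop :=
  (∀ w : W, ∃ c : (α w).verts, ∀ x : (α w).verts, ∃ p : (α w).coe.Walk c x, p.length ≤ d) ∧
  (∀ w w' : W, w ≠ w' → Disjoint (α w).verts (α w').verts) ∧
  (∀ w w' : W, H.Adj w w' → ∃ x ∈ (α w).verts, ∃ y ∈ (α w').verts, G.Adj x y)

/-- `H` is a shallow minor of `G` at depth `d`. -/
def IsShallowMinor {V W : Type} (G : SimpleGraph V) (H : SimpleGraph W) (d : ℕ) : Prop :=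
  ∃ α : W → G.Subgraph, IsShallowMinorModel G H d α

/-! ### Topological shallow minors -/

/-- A `d`-shallow topological minor model of `H` in `G`: an injective map `f` on vertices
together with, for every edge `uv` of `H`, a path of length at most `2d+1` in `G` from `f u`
to `f v`; the paths are pairwise vertex-disjoint apart from possibly sharing endpoints. -/
def IsTopMinorModel {V W : Type} (G : SimpleGraph V) (H : SimpleGraph W) (d : ℕ)
    (f : W → V) (P : ∀ ⦃u v : W⦄, H.Adj u v → G.Walk (f u) (f v)) : Prop :=
  Function.Injective f ∧
  (∀ ⦃u v : W⦄ (h : H.Adj u v), (P h).IsPath) ∧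
  (∀ ⦃u v : W⦄ (h : H.Adj u v), (P h).length ≤ 2 * d + 1) ∧
  (∀ ⦃u v : W⦄ (h : H.Adj u v), P h.symm = (P h).reverse) ∧
  (∀ ⦃u v u' v' : W⦄ (h : H.Adj u v) (h' : H.Adj u' v'), s(u, v) ≠ s(u', v') →
    ∀ x : V, x ∈ (P h).support → x ∈ (P h').support →
      (x = f u ∨ x = f v) ∧ (x = f u' ∨ x = f v'))

/-- `H` is a topological shallow minor of `G` at depth `d`. -/
def IsTopShallowMinor {V W : Type} (G : SimpleGraph V) (H : SimpleGraph W) (d : ℕ) : Prop :=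
  ∃ (f : W → V) (P : ∀ ⦃u v : W⦄, H.Adj u v → G.Walk (f u) (f v)),
    IsTopMinorModel G H d f P

/-! ### Ultraproducts of graphs -/

/-- The setoid identifying sequences agreeing on a set of the ultrafilter. -/
def prodSetoid (U : Ultrafilter ℕ) (Vs : ℕ → Type) : Setoid (∀ n, Vs n) where
  r g h := ∀ᶠ n in (U : Filter ℕ), g n = h n
  iseqv := by
    constructor
    · intro g; exact Eventually.of_forall fun n => rfl
    · intro g h hg; exact hg.mono fun n hn => hn.symm
    · intro g h k h1 h2; filter_upwards [h1, h2] with n e1 e2; rw [e1, e2]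

/-- The vertex set of the ultraproduct. -/
def UVertex (U : Ultrafilter ℕ) (Vs : ℕ → Type) : Type := Quotient (prodSetoid U Vs)

/-- The ultraproduct of a sequence of graphs along the ultrafilter `U`. -/
def UGraph (U : Ultrafilter ℕ) {Vs : ℕ → Type} (Gs : ∀ n, SimpleGraph (Vs n)) :
    SimpleGraph (UVertex U Vs) where
  Adj x y := Quotient.liftOn₂ x y
    (fun g h => ∀ᶠ n in (U : Filter ℕ), (Gs n).Adj (g n) (h n))
    (by
      intro a b a' b' ha hb
      apply propext
      constructor
      · intro hadj; filter_upwards [hadj, ha, hb] with n h1 h2 h3; rw [← h2, ← h3]; exact h1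
      · intro hadj; filter_upwards [hadj, ha, hb] with n h1 h2 h3; rw [h2, h3]; exact h1)
  symm := by
    constructor
    intro x y
    refine Quotient.inductionOn₂ x y ?_
    intro g h hadj
    exact hadj.mono fun n hn => hn.symm
  loopless := by
    constructor
    intro x
    refine Quotient.inductionOn x ?_
    intro g hadj
    obtain ⟨n, hn⟩ := hadj.exists
    exact (Gs n).loopless.irrefl _ hn

/-! ### Graph classes and class limits -/

/-- A class of graphs: a predicate on graphs over arbitrary vertex types. -/
def GraphClass : Type 1 := ∀ V : Type, SimpleGraph V → Prop

/-- `C` is a class of finite graphs. -/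
def FiniteClass (C : GraphClass) : Prop :=
  ∀ (V : Type) (G : SimpleGraph V), C V G → Finite V

/-- `H` is (isomorphic to) a subgraph of `G`. -/
def IsSubgraphOf {W V : Type} (H : SimpleGraph W) (G : SimpleGraph V) : Prop :=
  ∃ f : W → V, Function.Injective f ∧ ∀ ⦃u v : W⦄, H.Adj u v → G.Adj (f u) (f v)

/-- Membership in the class limit `C*`: subgraphs of ultraproducts of sequences from `C`. -/
def InLimit (U : Ultrafilter ℕ) (C : GraphClass) {W : Type} (H : SimpleGraph W) : Prop :=
  ∃ (Vs : ℕ → Type) (Gs : ∀ n, SimpleGraph (Vs n)),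
    (∀ n, C (Vs n) (Gs n)) ∧ IsSubgraphOf H (UGraph U Gs)

/-- `H ∈ C ▽ d`. -/
def InClassMinor (C : GraphClass) (d : ℕ) {W : Type} (H : SimpleGraph W) : Prop :=
  ∃ (V : Type) (G : SimpleGraph V), C V G ∧ IsShallowMinor G H d

/-- `H ∈ C ∇̃ d`. -/
def InClassTopMinor (C : GraphClass) (d : ℕ) {W : Type} (H : SimpleGraph W) : Prop :=
  ∃ (V : Type) (G : SimpleGraph V), C V G ∧ IsTopShallowMinor G H d

/-- `H ∈ C* ▽ d`. -/
def InLimitMinor (U : Ultrafilter ℕ) (C : GraphClass) (d : ℕ) {W : Type}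
    (H : SimpleGraph W) : Prop :=
  ∃ (V : Type) (G : SimpleGraph V), InLimit U C G ∧ IsShallowMinor G H d

/-- `H ∈ C* ∇̃ d`. -/
def InLimitTopMinor (U : Ultrafilter ℕ) (C : GraphClass) (d : ℕ) {W : Type}
    (H : SimpleGraph W) : Prop :=
  ∃ (V : Type) (G : SimpleGraph V), InLimit U C G ∧ IsTopShallowMinor G H d

/-- `C` is somewhere dense: all finite graphs are shallow minors at some fixed depth. -/
def SomewhereDense (C : GraphClass) : Prop :=
  ∃ d : ℕ, ∀ (W : Type) (H : SimpleGraph W), Finite W → InClassMinor C d H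

/-- `C` is topologically somewhere dense. -/
def TopSomewhereDense (C : GraphClass) : Prop :=
  ∃ d : ℕ, ∀ (W : Type) (H : SimpleGraph W), Finite W → InClassTopMinor C d H

/-- The countably infinite clique `K_ω`. -/
def Komega : SimpleGraph ℕ := ⊤

/-- The clique on continuum many vertices `K_𝔠`. -/
def Kcontinuum : SimpleGraph (Set ℕ) := ⊤

/-- `C` is hereditary: closed under induced subgraphs. -/
def Hereditary (C : GraphClass) : Prop :=
  ∀ (V : Type) (G : SimpleGraph V), C V G →
    ∀ (W : Type) (f : W → V), Function.Injective f → C W (G.comap f)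

/-! ### Scattered sets and quasi-wideness -/

/-- `X` is a `d`-scattered set of `G - S`: it avoids `S`, and any two distinct vertices of `X`
are at distance greater than `2d` in `G - S` (every connecting walk avoiding `S` is longer
than `2d`). -/
def ScatteredIn {V : Type} (G : SimpleGraph V) (d : ℕ) (S X : Set V) : Prop :=
  Disjoint X S ∧ ∀ u ∈ X, ∀ v ∈ X, u ≠ v →
    ∀ p : G.Walk u v, (∀ x ∈ p.support, x ∉ S) → 2 * d < p.length

/-- `C` is quasi-wide with margin `s`. -/
def QuasiWide (C : GraphClass) (s : ℕ → ℕ) : Prop :=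
  ∀ d m : ℕ, ∃ N : ℕ, ∀ (V : Type) (G : SimpleGraph V), C V G → N ≤ Nat.card V →
    ∃ S X : Set V, S.Finite ∧ S.ncard ≤ s d ∧ X.Finite ∧ X.ncard = m ∧ ScatteredIn G d S X

/-- `C` is uniformly quasi-wide with margin `s`. -/
def UniformlyQuasiWide (C : GraphClass) (s : ℕ → ℕ) : Prop :=
  ∀ d m : ℕ, ∃ N : ℕ, ∀ (V : Type) (G : SimpleGraph V), C V G →
    ∀ W : Set V, N ≤ W.ncard →
      ∃ S X : Set V, S.Finite ∧ S.ncard ≤ s d ∧ X ⊆ W ∧ X.Finite ∧ X.ncard = m ∧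
        ScatteredIn G d S X

/-- `C` is limit quasi-wide. -/
def LimitQW (U : Ultrafilter ℕ) (C : GraphClass) : Prop :=
  ∀ (d : ℕ) (V : Type) (G : SimpleGraph V), InLimit U C G → Infinite V →
    ∃ S X : Set V, S.Finite ∧ X.Infinite ∧ ScatteredIn G d S X

/-- `C` is uniformly limit quasi-wide. -/
def UniformLimitQW (U : Ultrafilter ℕ) (C : GraphClass) : Prop :=
  ∀ (d : ℕ) (V : Type) (G : SimpleGraph V), InLimit U C G →
    ∀ W : Set V, W.Infinite →
      ∃ S X : Set V, S.Finite ∧ X ⊆ W ∧ X.Infinite ∧ ScatteredIn G d S X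

/-- `C` is strongly limit quasi-wide with margin `s`. -/
def StrongLimitQW (U : Ultrafilter ℕ) (C : GraphClass) (s : ℕ → ℕ) : Prop :=
  ∀ (d : ℕ) (V : Type) (G : SimpleGraph V), InLimit U C G → Infinite V →
    ∃ S X : Set V, S.Finite ∧ S.ncard ≤ s d ∧ X.Infinite ∧ ScatteredIn G d S X

/-- `C` is strongly uniformly limit quasi-wide with margin `s`. -/
def StrongUniformLimitQW (U : Ultrafilter ℕ) (C : GraphClass) (s : ℕ → ℕ) : Prop :=
  ∀ (d : ℕ) (V : Type) (G : SimpleGraph V), InLimit U C G →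
    ∀ W : Set V, W.Infinite →
      ∃ S X : Set V, S.Finite ∧ S.ncard ≤ s d ∧ X ⊆ W ∧ X.Infinite ∧ ScatteredIn G d S X

/-! ### The splitter game -/

/-- One round of the splitter game: from arena `A`, connector picks `v`, splitter picks `W`;
the new arena consists of the vertices of `A` outside `W` at distance at most `d` from `v`
in the subgraph induced by `A`. -/
def arenaStep {V : Type} (G : SimpleGraph V) (d : ℕ) (A : Set V) (v : V) (W : Set V) : Set V :=
  {x | x ∈ A ∧ x ∉ W ∧ ∃ p : G.Walk v x, p.length ≤ d ∧ ∀ y ∈ p.support, y ∈ A}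

/-- The arena after a (chronological) history of moves. -/
def arenaAfter {V : Type} (G : SimpleGraph V) (d : ℕ) (hist : List (V × Set V)) : Set V :=
  hist.foldl (fun A mv => arenaStep G d A mv.1 mv.2) Set.univ

/-- A strategy for splitter: given the history and connector's new move, produce a set. -/
def SplitterStrategy (V : Type) : Type := List (V × Set V) → V → Set V

/-- The history of the play where connector plays `c` and splitter follows `σ`. -/
def splitterHist {V : Type} (σ : SplitterStrategy V) (c : ℕ → V) : ℕ → List (V × Set V)
  | 0 => []
  | n + 1 => splitterHist σ c n ++ [(c n, σ (splitterHist σ c n) (c n))]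

/-- Connector's first `n` moves are valid (inside the successive arenas). -/
def ConsistentPlay {V : Type} (G : SimpleGraph V) (d : ℕ) (σ : SplitterStrategy V)
    (c : ℕ → V) (n : ℕ) : Prop :=
  ∀ k < n, c k ∈ arenaAfter G d (splitterHist σ c k)

/-- `σ` is a winning strategy for splitter in the limit `d`-splitter game on `G`:
its moves are valid (finite subsets of the arena) along any consistent play, and no
infinite sequence of valid connector moves exists. -/
def SplitterWinsLimit {V : Type} (G : SimpleGraph V) (d : ℕ) (σ : SplitterStrategy V) : Prop :=
  (∀ (c : ℕ → V) (n : ℕ), ConsistentPlay G d σ c (n + 1) →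
      (σ (splitterHist σ c n) (c n)).Finite ∧
      σ (splitterHist σ c n) (c n) ⊆ arenaAfter G d (splitterHist σ c n)) ∧
  (∀ c : ℕ → V, ∃ n : ℕ, c n ∉ arenaAfter G d (splitterHist σ c n))

/-- `σ` is a winning strategy for splitter in the `(ℓ, m, d)`-splitter game on `G`. -/
def SplitterWinsGame {V : Type} (G : SimpleGraph V) (l m d : ℕ) (σ : SplitterStrategy V) :
    Prop :=
  (∀ (c : ℕ → V) (n : ℕ), ConsistentPlay G d σ c (n + 1) →
      (σ (splitterHist σ c n) (c n)).Finite ∧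
      (σ (splitterHist σ c n) (c n)).ncard ≤ m ∧
      σ (splitterHist σ c n) (c n) ⊆ arenaAfter G d (splitterHist σ c n)) ∧
  (∀ c : ℕ → V, ∃ n ≤ l, c n ∉ arenaAfter G d (splitterHist σ c n))

/-- A strategy for connector: given the history, produce a vertex. -/
def ConnectorStrategy (V : Type) : Type := List (V × Set V) → V

/-- The history of the play where connector follows `τ` and splitter plays `w`. -/
def connectorHist {V : Type} (τ : ConnectorStrategy V) (w : ℕ → Set V) :
    ℕ → List (V × Set V)
  | 0 => []
  | n + 1 => connectorHist τ w n ++ [(τ (connectorHist τ w n), w n)]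

/-- `τ` is a winning strategy for connector in the limit `d`-splitter game on `G`:
as long as splitter's moves are valid, connector's moves stay in the arena forever. -/
def ConnectorWinsLimit {V : Type} (G : SimpleGraph V) (d : ℕ) (τ : ConnectorStrategy V) :
    Prop :=
  ∀ (w : ℕ → Set V) (n : ℕ),
    (∀ k < n, (w k).Finite ∧ w k ⊆ arenaAfter G d (connectorHist τ w k)) →
    τ (connectorHist τ w n) ∈ arenaAfter G d (connectorHist τ w n)

/-- `τ` is a winning strategy for connector in the `(ℓ, m, d)`-splitter game on `G`:
the arena stays nonempty for `ℓ` rounds, i.e. connector has valid moves at rounds `0,…,ℓ`. -/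
def ConnectorWinsGame {V : Type} (G : SimpleGraph V) (l m d : ℕ) (τ : ConnectorStrategy V) :
    Prop :=
  ∀ (w : ℕ → Set V) (n : ℕ), n ≤ l →
    (∀ k < n, (w k).Finite ∧ (w k).ncard ≤ m ∧
      w k ⊆ arenaAfter G d (connectorHist τ w k)) →
    τ (connectorHist τ w n) ∈ arenaAfter G d (connectorHist τ w n)

/-- `C` is winning for splitter. -/
def WinningForSplitter (C : GraphClass) : Prop :=
  ∀ d : ℕ, ∃ l m : ℕ, ∀ (V : Type) (G : SimpleGraph V), C V G →
    ∃ σ : SplitterStrategy V, SplitterWinsGame G l m d σ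

/-- `C` is limit winning for splitter. -/
def LimitWinningForSplitter (U : Ultrafilter ℕ) (C : GraphClass) : Prop :=
  ∀ (d : ℕ) (V : Type) (G : SimpleGraph V), InLimit U C G →
    ∃ σ : SplitterStrategy V, SplitterWinsLimit G d σ

/-! ### First-order satisfaction in graphs -/

/-- `G` satisfies the first-order sentence `φ` in the language of graphs. -/
def GSat {V : Type} (G : SimpleGraph V) (φ : FirstOrder.Language.graph.Sentence) : Prop :=
  @FirstOrder.Language.Sentence.Realize FirstOrder.Language.graph V G.structure φ

/-!
An `s`-shallow model `β` of `F` in `H` and an `r`-shallow model `α` of `H` in `G` compose: the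
branch set of `x` is the union of the `α`-branch sets over the `β`-branch set of `x`. Along a
walk of length at most `s` in `β x` one moves from centre to centre of consecutive `α`-branch
sets with at most `r + 1 + r` edges of `G` per step, and then at most `r` more edges reach any
vertex of the final branch set: `(2r + 1)s + r = 2rs + r + s`.
-/

section Compose

variable {V W X : Type} {G : SimpleGraph V} {H : SimpleGraph W} {F : SimpleGraph X}

def HasRadiusLE (A : G.Subgraph) (d : ℕ) : Prop :=
  ∃ c : A.verts, ∀ y : A.verts, ∃ p : A.coe.Walk c y, p.length ≤ d

def composeModel (α : W → G.Subgraph) (β : X → H.Subgraph) (x : X) : G.Subgraph :=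
  (⊤ : G.Subgraph).induce (⋃ w ∈ (β x).verts, (α w).verts)

variable {α : W → G.Subgraph} {β : X → H.Subgraph}

theorem le_composeModel {x : X} {w : W} (hw : w ∈ (β x).verts) :
    α w ≤ composeModel α β x :=
  Subgraph.le_induce_top_verts.trans <| Subgraph.induce_mono_right <|
    Set.subset_biUnion_of_mem (u := fun w => (α w).verts) hw

theorem exists_walk_composeModel {r : ℕ} (c : ∀ w, (α w).verts)
    (hc : ∀ w (y : (α w).verts), ∃ p : (α w).coe.Walk (c w) y, p.length ≤ r)
    (hadj : ∀ w w', H.Adj w w' → ∃ a ∈ (α w).verts, ∃ b ∈ (α w').verts, G.Adj a b)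
    {x : X} {u v : (β x).verts} (q : (β x).coe.Walk u v) :
    ∃ p : (composeModel α β x).coe.Walk (Subgraph.inclusion (le_composeModel u.2) (c u))
        (Subgraph.inclusion (le_composeModel v.2) (c v)),
      p.length ≤ (2 * r + 1) * q.length := by
  induction q with
  | nil => exact ⟨.nil, by simp⟩
  | @cons u m v h q ih =>
    obtain ⟨a, ha, b, hb, hab⟩ := hadj u m ((β x).adj_sub h)
    obtain ⟨p₁, hp₁⟩ := hc u ⟨a, ha⟩
    obtain ⟨p₂, hp₂⟩ := hc m ⟨b, hb⟩
    obtain ⟨p, hp⟩ := ih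
    let ιu := Subgraph.inclusion (le_composeModel (α := α) u.2)
    let ιm := Subgraph.inclusion (le_composeModel (α := α) m.2)
    have edge : (composeModel α β x).coe.Adj (ιu ⟨a, ha⟩) (ιm ⟨b, hb⟩) :=
      ⟨(ιu ⟨a, ha⟩).2, (ιm ⟨b, hb⟩).2, hab⟩
    refine ⟨(p₁.map ιu).append (.cons edge ((p₂.map ιm).reverse.append p)), ?_⟩
    simp only [Walk.length_append, Walk.length_cons, Walk.length_reverse, Walk.length_map]
    rw [Nat.mul_succ]
    omega

theorem hasRadiusLE_composeModel {r s : ℕ} (hαr : ∀ w, HasRadiusLE (α w) r)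
    (hadj : ∀ w w', H.Adj w w' → ∃ a ∈ (α w).verts, ∃ b ∈ (α w').verts, G.Adj a b)
    {x : X} (hβr : HasRadiusLE (β x) s) :
    HasRadiusLE (composeModel α β x) (2 * r * s + r + s) := by
  choose c hc using hαr
  obtain ⟨cx, hcx⟩ := hβr
  refine ⟨Subgraph.inclusion (le_composeModel cx.2) (c cx), ?_⟩
  rintro ⟨y, hy⟩
  obtain ⟨w, hw, hyw⟩ : ∃ w ∈ (β x).verts, y ∈ (α w).verts := by
    simpa [composeModel] using hy
  obtain ⟨q, hq⟩ := hcx ⟨w, hw⟩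
  obtain ⟨p, hp⟩ := exists_walk_composeModel c hc hadj q
  obtain ⟨p', hp'⟩ : ∃ p' : (composeModel α β x).coe.Walk
      (Subgraph.inclusion (le_composeModel hw) (c w)) ⟨y, hy⟩, p'.length ≤ r := by
    obtain ⟨p', hp'⟩ := hc w ⟨y, hyw⟩
    exact ⟨p'.map (Subgraph.inclusion (le_composeModel hw)), (Walk.length_map _ _).trans_le hp'⟩
  refine ⟨p.append p', ?_⟩
  rw [Walk.length_append]
  calc p.length + p'.length ≤ (2 * r + 1) * s + r := by gcongr; exact hp.trans (by gcongr)
    _ = 2 * r * s + r + s := by ring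

theorem disjoint_composeModel
    (hαd : ∀ w w', w ≠ w' → Disjoint (α w).verts (α w').verts) {x x' : X}
    (hβd : Disjoint (β x).verts (β x').verts) :
    Disjoint (composeModel α β x).verts (composeModel α β x').verts := by
  simp only [composeModel, Subgraph.induce_verts, Set.disjoint_iUnion_left,
    Set.disjoint_iUnion_right]
  exact fun w' hw' w hw => hαd w w' (hβd.ne_of_mem hw hw')

theorem exists_adj_composeModel
    (hadj : ∀ w w', H.Adj w w' → ∃ a ∈ (α w).verts, ∃ b ∈ (α w').verts, G.Adj a b) {x x' : X}
    (hβadj : ∃ w ∈ (β x).verts, ∃ w' ∈ (β x').verts, H.Adj w w') :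
    ∃ a ∈ (composeModel α β x).verts, ∃ b ∈ (composeModel α β x').verts, G.Adj a b := by
  obtain ⟨w, hw, w', hw', hww'⟩ := hβadj
  obtain ⟨a, ha, b, hb, hab⟩ := hadj w w' hww'
  exact ⟨a, le_composeModel hw |>.1 ha, b, le_composeModel hw' |>.1 hb, hab⟩

theorem IsShallowMinorModel.comp {r s : ℕ} (hα : IsShallowMinorModel G H r α)
    (hβ : IsShallowMinorModel H F s β) :
    IsShallowMinorModel G F (2 * r * s + r + s) (composeModel α β) :=
  ⟨fun _ => hasRadiusLE_composeModel hα.1 hα.2.2 (hβ.1 _),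
    fun _ _ hne => disjoint_composeModel hα.2.1 (hβ.2.1 _ _ hne),
    fun _ _ h => exists_adj_composeModel hα.2.2 (hβ.2.2 _ _ h)⟩

end Compose

/-- `(G ▽ r) ▽ s ⊆ G ▽ (2rs + r + s)`: if `H` is a shallow minor of `G`
at depth `r` and `F` is a shallow minor of `H` at depth `s`, then `F` is a shallow minor of
`G` at depth `2rs + r + s`. -/
theorem shallowMinor_trans {V W X : Type} (G : SimpleGraph V) (H : SimpleGraph W)
    (F : SimpleGraph X) (r s : ℕ)
    (hGH : IsShallowMinor G H r) (hHF : IsShallowMinor H F s) :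
    IsShallowMinor G F (2 * r * s + r + s) := by
  obtain ⟨α, hα⟩ := hGH
  obtain ⟨β, hβ⟩ := hHF
  exact ⟨composeModel α β, hα.comp hβ⟩

end NWD
end

section
/- Fix a class C of finite graphs and d ∈ ℕ. Then (a) (C▽d)* ⊆ C*▽d, and (b) (C∇̃d)* ⊆ C*∇̃d. That is, every subgraph of an ultraproduct of a sequence of graphs that are (topological) shallow minors at depth d of graphs from C is itself a (topological) shallow minor at depth d of a graph in the class limit C*. -/
namespace NWD

open SimpleGraph Filter

/-!
Shallow minor models can be taken coordinatewise through an ultraproduct. If `α n` models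
`H n` in `G n`, the branch set of `[w]` is the ultraproduct of the branch sets `α n (w n)`;
if `f n` with paths `P n` is a topological model, `[w]` goes to `[n ↦ f n (w n)]`. The key
point is that walks of bounded length survive: the ultrafilter picks a common length `ℓ`,
and the ultraproduct of the `i`-th vertices, `i ≤ ℓ`, is a walk of length `ℓ`, a path if
almost all the walks are, each of whose vertices lies almost everywhere on the original
walks. Disjointness and injectivity pass to the ultraproduct by Łoś. A subgraph of the
ultraproduct of the `H n` is then a shallow minor of the ultraproduct of the `G n`, which
lies in `C*`.
-/

theorem _root_.SimpleGraph.exists_walk_getVert_eq {V : Type} (G : SimpleGraph V) :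
    ∀ (ℓ : ℕ) (q : ℕ → V), (∀ i < ℓ, G.Adj (q i) (q (i + 1))) →
      ∃ p : G.Walk (q 0) (q ℓ), p.length = ℓ ∧ ∀ i ≤ ℓ, p.getVert i = q i
  | 0, q, _ => ⟨.nil, rfl, fun i hi => by rw [Nat.le_zero.mp hi]; rfl⟩
  | ℓ + 1, q, h => by
    obtain ⟨p, hlen, hget⟩ := exists_walk_getVert_eq G ℓ (fun i => q (i + 1)) fun i hi =>
      h (i + 1) (by omega)
    refine ⟨.cons (h 0 (by omega)) p, by simp [hlen], fun i hi => ?_⟩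
    rcases i with _ | i
    · rfl
    · rw [Walk.getVert_cons_succ]; exact hget i (by omega)

theorem _root_.SimpleGraph.Subgraph.exists_isPath_of_walk_coe {V : Type} {G : SimpleGraph V}
    {S : G.Subgraph} {u v : S.verts} (p : S.coe.Walk u v) :
    ∃ q : G.Walk u v, q.IsPath ∧ q.length ≤ p.length ∧ ∀ z ∈ q.support, z ∈ S.verts := by
  classical
  refine ⟨(p.map S.hom).bypass, Walk.bypass_isPath _,
    (Walk.length_bypass_le_length _).trans (Walk.length_map _ _).le, fun z hz => ?_⟩
  obtain ⟨y, -, rfl⟩ := List.mem_map.mp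
    (Walk.support_map S.hom p ▸ Walk.support_bypass_subset_support _ hz)
  exact y.2

theorem _root_.SimpleGraph.Walk.length_induce {V : Type} {G : SimpleGraph V} {s : Set V}
    {u v : V} (p : G.Walk u v) (hp : ∀ x ∈ p.support, x ∈ s) :
    (p.induce s hp).length = p.length := by
  have := congrArg List.length (Walk.support_induce p hp)
  rw [List.length_attachWith, Walk.length_support, Walk.length_support] at this
  omega

theorem _root_.SimpleGraph.exists_walk_coe_induce_top {V : Type} {G : SimpleGraph V} {s : Set V}
    {u v : V} (p : G.Walk u v) (hp : ∀ x ∈ p.support, x ∈ s) :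
    ∃ q : ((⊤ : G.Subgraph).induce s).coe.Walk ⟨u, hp u p.start_mem_support⟩
      ⟨v, hp v p.end_mem_support⟩, q.length = p.length :=
  ⟨(p.induce s hp).mapLe (induce_eq_coe_induce_top s).le,
    (Walk.length_mapLe _ _).trans (p.length_induce hp)⟩

theorem _root_.SimpleGraph.exists_walks_reverse_eq {V W : Type} {G : SimpleGraph V}
    {H : SimpleGraph W} {f : W → V} (R : ∀ u v : W, G.Walk (f u) (f v) → Prop)
    (hR : ∀ u v p, R u v p → R v u p.reverse) (h : ∀ u v, H.Adj u v → ∃ p, R u v p) :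
    ∃ P : ∀ ⦃u v : W⦄, H.Adj u v → G.Walk (f u) (f v),
      (∀ ⦃u v⦄ (huv : H.Adj u v), R u v (P huv)) ∧
      ∀ ⦃u v⦄ (huv : H.Adj u v), P huv.symm = (P huv).reverse := by
  choose Q hQ using h
  let : LinearOrder W := IsWellOrder.linearOrder WellOrderingRel
  refine ⟨fun u v huv => if u < v then Q u v huv else (Q v u huv.symm).reverse,
    fun u v huv => ?_, fun u v huv => ?_⟩
  · dsimp only
    split_ifs
    · exact hQ u v huv
    · exact hR _ _ _ (hQ v u huv.symm)
  · rcases huv.ne.lt_or_gt with huv' | huv'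
    · simp [huv', not_lt_of_gt huv']
    · simp [huv', not_lt_of_gt huv']

namespace UVertex

variable {U : Ultrafilter ℕ} {Vs : ℕ → Type}

def mk (U : Ultrafilter ℕ) (g : ∀ n, Vs n) : UVertex U Vs := Quotient.mk _ g

theorem mk_out (x : UVertex U Vs) : mk U x.out = x := Quotient.out_eq x

theorem mk_eq_mk {g h : ∀ n, Vs n} : mk U g = mk U h ↔ ∀ᶠ n in (U : Filter ℕ), g n = h n :=
  Quotient.eq

theorem eq_mk_iff {x : UVertex U Vs} {g : ∀ n, Vs n} :
    x = mk U g ↔ ∀ᶠ n in (U : Filter ℕ), x.out n = g n := by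
  conv_lhs => rw [← mk_out x]
  exact mk_eq_mk

theorem eq_iff {x y : UVertex U Vs} : x = y ↔ ∀ᶠ n in (U : Filter ℕ), x.out n = y.out n := by
  conv_lhs => rw [← mk_out y]
  exact eq_mk_iff

theorem ne_iff {x y : UVertex U Vs} : x ≠ y ↔ ∀ᶠ n in (U : Filter ℕ), x.out n ≠ y.out n := by
  rw [Ne, eq_iff, ← Ultrafilter.eventually_not]

theorem sym2_ne_iff {x y x' y' : UVertex U Vs} :
    s(x, y) ≠ s(x', y') ↔ ∀ᶠ n in (U : Filter ℕ), s(x.out n, y.out n) ≠ s(x'.out n, y'.out n) := by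
  simp only [Ne, Sym2.eq_iff, ← Ultrafilter.eventually_not, eq_iff, ← Filter.eventually_and,
    ← Ultrafilter.eventually_or]

theorem eq_mk_or_eq_mk {x : UVertex U Vs} {g h : ∀ n, Vs n}
    (hx : ∀ᶠ n in (U : Filter ℕ), x.out n = g n ∨ x.out n = h n) : x = mk U g ∨ x = mk U h := by
  simpa only [eq_mk_iff] using Ultrafilter.eventually_or.mp hx

def uSet (U : Ultrafilter ℕ) (S : ∀ n, Set (Vs n)) : Set (UVertex U Vs) :=
  {x | ∀ᶠ n in (U : Filter ℕ), x.out n ∈ S n}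

theorem mk_mem_uSet {S : ∀ n, Set (Vs n)} {g : ∀ n, Vs n} :
    mk U g ∈ uSet U S ↔ ∀ᶠ n in (U : Filter ℕ), g n ∈ S n :=
  Filter.eventually_congr <| (eq_mk_iff.mp rfl).mono fun n hn => by rw [hn]

theorem disjoint_uSet {S T : ∀ n, Set (Vs n)}
    (h : ∀ᶠ n in (U : Filter ℕ), Disjoint (S n) (T n)) : Disjoint (uSet U S) (uSet U T) :=
  Set.disjoint_left.mpr fun _ hS hT =>
    (h.and (hS.and hT)).exists.elim fun _ ⟨hST, hxS, hxT⟩ => Set.disjoint_left.mp hST hxS hxT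

end UVertex

open UVertex

namespace UGraph

variable {U : Ultrafilter ℕ} {Vs : ℕ → Type} {Gs : ∀ n, SimpleGraph (Vs n)}

theorem adj_mk {g h : ∀ n, Vs n} :
    (UGraph U Gs).Adj (mk U g) (mk U h) ↔ ∀ᶠ n in (U : Filter ℕ), (Gs n).Adj (g n) (h n) :=
  Iff.rfl

theorem adj_iff {x y : UVertex U Vs} :
    (UGraph U Gs).Adj x y ↔ ∀ᶠ n in (U : Filter ℕ), (Gs n).Adj (x.out n) (y.out n) := by
  conv_lhs => rw [← mk_out x, ← mk_out y]
  exact adj_mk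

theorem exists_isPath {a b : ∀ n, Vs n} {S : ∀ n, Set (Vs n)} {L : ℕ}
    (h : ∀ᶠ n in (U : Filter ℕ), ∃ p : (Gs n).Walk (a n) (b n),
      p.IsPath ∧ p.length ≤ L ∧ ∀ z ∈ p.support, z ∈ S n) :
    ∃ q : (UGraph U Gs).Walk (mk U a) (mk U b),
      q.IsPath ∧ q.length ≤ L ∧ ∀ z ∈ q.support, z ∈ uSet U S := by
  -- only the finitely many lengths `≤ L` occur, so one of them occurs `U`-almost everywhere
  obtain ⟨ℓ, hℓL, hℓ⟩ := (Ultrafilter.eventually_exists_mem_iff (Set.finite_Iic L)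
    (P := fun ℓ n => ∃ p : (Gs n).Walk (a n) (b n),
      p.IsPath ∧ p.length = ℓ ∧ ∀ z ∈ p.support, z ∈ S n)).mp <|
    h.mono fun n ⟨p, hp, hpL, hpS⟩ => ⟨p.length, hpL, p, hp, rfl, hpS⟩
  have : ∀ n, Nonempty (ℕ → Vs n) := fun n => ⟨fun _ => a n⟩
  obtain ⟨qs, hqs⟩ := (Filter.skolem (P := fun n (q : ℕ → Vs n) =>
      q 0 = a n ∧ q ℓ = b n ∧ (∀ i < ℓ, (Gs n).Adj (q i) (q (i + 1))) ∧
        Set.InjOn q {i | i ≤ ℓ} ∧ ∀ i, q i ∈ S n)).mp <| by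
    filter_upwards [hℓ] with n ⟨p, hp, hpℓ, hpS⟩
    exact ⟨p.getVert, p.getVert_zero, hpℓ ▸ p.getVert_length,
      fun i hi => p.adj_getVert_succ (hpℓ ▸ hi), hpℓ ▸ hp.getVert_injOn,
      fun i => hpS _ (p.getVert_mem_support i)⟩
  let Q : ℕ → UVertex U Vs := fun i => mk U fun n => qs n i
  obtain ⟨p, hpℓ, hpQ⟩ := (UGraph U Gs).exists_walk_getVert_eq ℓ Q fun i hi =>
    hqs.mono fun n hn => hn.2.2.1 i hi
  have hQ0 : Q 0 = mk U a := mk_eq_mk.mpr (hqs.mono fun n hn => hn.1)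
  have hQℓ : Q ℓ = mk U b := mk_eq_mk.mpr (hqs.mono fun n hn => hn.2.1)
  refine ⟨p.copy hQ0 hQℓ, ?_, by rw [Walk.length_copy, hpℓ]; exact hℓL, ?_⟩
  · rw [Walk.isPath_copy, ← Walk.IsPath.getVert_injOn_iff, hpℓ]
    intro i hi j hj hij
    rw [hpQ i hi, hpQ j hj] at hij
    obtain ⟨n, hn, hnij⟩ := (hqs.and (mk_eq_mk.mp hij)).exists
    exact hn.2.2.2.1 hi hj hnij
  · intro z hz
    rw [Walk.support_copy, Walk.mem_support_iff_exists_getVert] at hz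
    obtain ⟨i, rfl, hi⟩ := hz
    rw [hpQ i (hpℓ ▸ hi)]
    exact mk_mem_uSet.mpr (hqs.mono fun n hn => hn.2.2.2.2 i)

end UGraph

section Ultraproduct

variable {U : Ultrafilter ℕ} {Vs Ws : ℕ → Type} {Gs : ∀ n, SimpleGraph (Vs n)}
  {Hs : ∀ n, SimpleGraph (Ws n)} {d : ℕ}

theorem IsShallowMinor.uGraph (hm : ∀ n, IsShallowMinor (Gs n) (Hs n) d) :
    IsShallowMinor (UGraph U Gs) (UGraph U Hs) d := by
  choose α hα using hm
  choose c hc using fun n w => (hα n).1 w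
  let X : UVertex U Ws → Set (UVertex U Vs) := fun w => uSet U fun n => (α n (w.out n)).verts
  refine ⟨fun w => (⊤ : (UGraph U Gs).Subgraph).induce (X w), fun w => ?_,
    fun w w' hww' => ?_, fun w w' hww' => ?_⟩
  · have hcX : mk U (fun n => (c n (w.out n)).val) ∈ X w :=
      mk_mem_uSet.mpr (.of_forall fun n => (c n (w.out n)).2)
    refine ⟨⟨_, hcX⟩, fun ⟨x, hx⟩ => ?_⟩
    obtain ⟨q, -, hqd, hqX⟩ := UGraph.exists_isPath (Gs := Gs) (L := d)
      (a := fun n => (c n (w.out n)).val) (b := x.out) (S := fun n => (α n (w.out n)).verts) <| by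
      filter_upwards [hx] with n hn
      obtain ⟨p, hp⟩ := hc n (w.out n) ⟨x.out n, hn⟩
      obtain ⟨q, hq, hqp, hqS⟩ := Subgraph.exists_isPath_of_walk_coe p
      exact ⟨q, hq, hqp.trans hp, hqS⟩
    obtain ⟨r, hr⟩ := exists_walk_coe_induce_top (q.copy rfl (mk_out x))
      (by simpa only [Walk.support_copy] using hqX)
    exact ⟨r, hr.trans_le (by rwa [Walk.length_copy])⟩
  · exact disjoint_uSet ((ne_iff.mp hww').mono fun n hn => (hα n).2.1 _ _ hn)
  · have : ∀ n, Nonempty (Vs n × Vs n) :=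
      fun n => ⟨((c n (w.out n)).val, (c n (w.out n)).val)⟩
    obtain ⟨g, hg⟩ := (Filter.skolem (P := fun n (xy : Vs n × Vs n) =>
        xy.1 ∈ (α n (w.out n)).verts ∧ xy.2 ∈ (α n (w'.out n)).verts ∧
          (Gs n).Adj xy.1 xy.2)).mp <| (UGraph.adj_iff.mp hww').mono fun n hn => by
      obtain ⟨x, hx, y, hy, hxy⟩ := (hα n).2.2 _ _ hn
      exact ⟨(x, y), hx, hy, hxy⟩
    exact ⟨mk U fun n => (g n).1, mk_mem_uSet.mpr (hg.mono fun n hn => hn.1),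
      mk U fun n => (g n).2, mk_mem_uSet.mpr (hg.mono fun n hn => hn.2.1),
      UGraph.adj_mk.mpr (hg.mono fun n hn => hn.2.2)⟩

theorem IsTopShallowMinor.uGraph (hm : ∀ n, IsTopShallowMinor (Gs n) (Hs n) d) :
    IsTopShallowMinor (UGraph U Gs) (UGraph U Hs) d := by
  choose f P hP using hm
  let F : UVertex U Ws → UVertex U Vs := fun x => mk U fun n => f n (x.out n)
  let R : ∀ u v : UVertex U Ws, (UGraph U Gs).Walk (F u) (F v) → Prop := fun u v p =>
    p.IsPath ∧ p.length ≤ 2 * d + 1 ∧ ∀ z ∈ p.support, ∀ᶠ n in (U : Filter ℕ),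
      ∃ h : (Hs n).Adj (u.out n) (v.out n), z.out n ∈ (P n h).support
  have hR : ∀ u v p, R u v p → R v u p.reverse := by
    rintro u v p ⟨hp, hpd, hpS⟩
    refine ⟨hp.reverse, by rwa [Walk.length_reverse], fun z hz => ?_⟩
    rw [Walk.support_reverse, List.mem_reverse] at hz
    filter_upwards [hpS z hz] with n ⟨h, hzn⟩
    refine ⟨h.symm, ?_⟩
    rwa [(hP n).2.2.2.1 h, Walk.support_reverse, List.mem_reverse]
  obtain ⟨Q, hQ, hQsymm⟩ := exists_walks_reverse_eq R hR fun u v huv =>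
    UGraph.exists_isPath (S := fun n => {z | ∃ h : (Hs n).Adj (u.out n) (v.out n),
      z ∈ (P n h).support}) <| (UGraph.adj_iff.mp huv).mono fun n hn =>
        ⟨P n hn, (hP n).2.1 hn, (hP n).2.2.1 hn, fun _ hz => ⟨hn, hz⟩⟩
  refine ⟨F, Q, fun x y hxy => eq_iff.mpr ((mk_eq_mk.mp hxy).mono fun n hn => (hP n).1 hn),
    fun u v h => (hQ h).1, fun u v h => (hQ h).2.1, hQsymm, ?_⟩
  intro u v u' v' h h' hne z hz hz'
  have hzn : ∀ᶠ n in (U : Filter ℕ),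
      (z.out n = f n (u.out n) ∨ z.out n = f n (v.out n)) ∧
        (z.out n = f n (u'.out n) ∨ z.out n = f n (v'.out n)) := by
    filter_upwards [(hQ h).2.2 z hz, (hQ h').2.2 z hz', sym2_ne_iff.mp hne]
      with n ⟨hn, hzn⟩ ⟨hn', hzn'⟩ hne_n
    exact (hP n).2.2.2.2 hn hn' hne_n _ hzn hzn'
  exact ⟨eq_mk_or_eq_mk (hzn.mono fun _ h => h.1), eq_mk_or_eq_mk (hzn.mono fun _ h => h.2)⟩

end Ultraproduct

theorem IsShallowMinor.of_isSubgraphOf {V W W' : Type} {G : SimpleGraph V} {H : SimpleGraph W}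
    {H' : SimpleGraph W'} {d : ℕ} (hm : IsShallowMinor G H' d) (hs : IsSubgraphOf H H') :
    IsShallowMinor G H d := by
  obtain ⟨e, he, hadj⟩ := hs
  obtain ⟨α, hrad, hdisj, hedge⟩ := hm
  exact ⟨α ∘ e, fun w => hrad (e w), fun w w' hww' => hdisj _ _ (he.ne hww'),
    fun w w' hww' => hedge _ _ (hadj hww')⟩

theorem IsTopShallowMinor.of_isSubgraphOf {V W W' : Type} {G : SimpleGraph V}
    {H : SimpleGraph W} {H' : SimpleGraph W'} {d : ℕ} (hm : IsTopShallowMinor G H' d)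
    (hs : IsSubgraphOf H H') : IsTopShallowMinor G H d := by
  obtain ⟨e, he, hadj⟩ := hs
  obtain ⟨f, P, hf, hpath, hlen, hsymm, hdisj⟩ := hm
  refine ⟨f ∘ e, fun u v h => P (hadj h), hf.comp he, fun u v h => hpath _,
    fun u v h => hlen _, fun u v h => hsymm (hadj h), fun u v u' v' h h' hne => ?_⟩
  refine hdisj (hadj h) (hadj h') fun heq => hne (Sym2.map.injective he ?_)
  simpa only [Sym2.map_mk] using heq

theorem inLimit_uGraph {U : Ultrafilter ℕ} {C : GraphClass} {Vs : ℕ → Type}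
    {Gs : ∀ n, SimpleGraph (Vs n)} (hC : ∀ n, C (Vs n) (Gs n)) : InLimit U C (UGraph U Gs) :=
  ⟨Vs, Gs, hC, id, Function.injective_id, fun _ _ h => h⟩

theorem ultra_inclusion_general (U : Ultrafilter ℕ) (C : GraphClass) (d : ℕ) :
    (∀ (W : Type) (H : SimpleGraph W),
        InLimit U (fun _ G => InClassMinor C d G) H → InLimitMinor U C d H) ∧
    (∀ (W : Type) (H : SimpleGraph W),
        InLimit U (fun _ G => InClassTopMinor C d G) H → InLimitTopMinor U C d H) := by
  constructor
  · rintro W H ⟨Ws, Hs, hHs, hsub⟩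
    choose Vs Gs hC hm using hHs
    exact ⟨_, UGraph U Gs, inLimit_uGraph hC, (IsShallowMinor.uGraph hm).of_isSubgraphOf hsub⟩
  · rintro W H ⟨Ws, Hs, hHs, hsub⟩
    choose Vs Gs hC hm using hHs
    exact ⟨_, UGraph U Gs, inLimit_uGraph hC, (IsTopShallowMinor.uGraph hm).of_isSubgraphOf hsub⟩

/-- `(C ▽ d)* ⊆ C* ▽ d` and `(C ∇̃ d)* ⊆ C* ∇̃ d`. -/
theorem ultra_inclusion (U : Ultrafilter ℕ) (hU : ∀ a : ℕ, {a} ∉ U)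
    (C : GraphClass) (hfin : FiniteClass C) (d : ℕ) :
    (∀ (W : Type) (H : SimpleGraph W),
        InLimit U (fun _ G => InClassMinor C d G) H → InLimitMinor U C d H) ∧
    (∀ (W : Type) (H : SimpleGraph W),
        InLimit U (fun _ G => InClassTopMinor C d G) H → InLimitTopMinor U C d H) :=
  ultra_inclusion_general U C d

end NWD
end
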